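/- Let x, y ∈ ℝ^N be nonzero with angle θ(x,y) = arccos(⟨x,y⟩/(‖x‖‖y‖)). If x and y both lie in a closed convex cone C generated by unit vectors φ_1,...,φ_r (i.e., every element of C is a nonnegative combination of the φ_i), and θ_max = max_{i,j} θ(φ_i, φ_j) < π/2, then θ(x, y) ≤ θ_max. -/

import Mathlib

/-!
Write `x = ∑ ωᵢ φᵢ` and `y = ∑ ηⱼ φⱼ` with nonnegative weights. By the triangle inequality
`‖x‖ ≤ ∑ ωᵢ` and `‖y‖ ≤ ∑ ηⱼ`, while expanding the inner product and using
`⟪φᵢ, φⱼ⟫ ≥ cos θmax ≥ 0` gives `⟪x, y⟫ ≥ cos θmax (∑ ωᵢ)(∑ ηⱼ) ≥ cos θmax ‖x‖ ‖y‖`.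
Hence the cosine of the angle between `x` and `y` is at least `cos θmax`, and `arccos` is
antitone.
-/

open Finset RealInnerProductSpace

variable {ι : Type*}

lemma norm_sum_smul_le_sum {E : Type*} [SeminormedAddCommGroup E] [NormedSpace ℝ E]
    (s : Finset ι) {ω : ι → ℝ} {φ : ι → E} (hω : ∀ i ∈ s, 0 ≤ ω i) (hφ : ∀ i ∈ s, ‖φ i‖ ≤ 1) :
    ‖∑ i ∈ s, ω i • φ i‖ ≤ ∑ i ∈ s, ω i := by
  refine norm_sum_le_of_le s fun i hi => ?_
  calc ‖ω i • φ i‖ = ω i * ‖φ i‖ := by rw [norm_smul, Real.norm_of_nonneg (hω i hi)]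
    _ ≤ ω i * 1 := mul_le_mul_of_nonneg_left (hφ i hi) (hω i hi)
    _ = ω i := mul_one _

section InnerProductSpace

variable {E : Type*} [NormedAddCommGroup E] [InnerProductSpace ℝ E]

lemma mul_sum_mul_sum_le_inner_sum_smul (s t : Finset ι) {c : ℝ} {ω η : ι → ℝ}
    {φ ψ : ι → E} (hω : ∀ i ∈ s, 0 ≤ ω i) (hη : ∀ j ∈ t, 0 ≤ η j)
    (hφψ : ∀ i ∈ s, ∀ j ∈ t, c ≤ ⟪φ i, ψ j⟫) :
    c * ((∑ i ∈ s, ω i) * ∑ j ∈ t, η j) ≤ ⟪∑ i ∈ s, ω i • φ i, ∑ j ∈ t, η j • ψ j⟫ := by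
  rw [sum_mul_sum, mul_sum, sum_inner]
  refine sum_le_sum fun i hi => ?_
  rw [inner_sum, mul_sum]
  refine sum_le_sum fun j hj => ?_
  rw [real_inner_smul_left, real_inner_smul_right]
  calc c * (ω i * η j) ≤ ⟪φ i, ψ j⟫ * (ω i * η j) :=
        mul_le_mul_of_nonneg_right (hφψ i hi j hj) (mul_nonneg (hω i hi) (hη j hj))
    _ = ω i * (η j * ⟪φ i, ψ j⟫) := by ring

lemma le_inner_div_norm_mul_norm_of_eq_sum_smul [Fintype ι] {c : ℝ} (hc : 0 ≤ c)
    {φ : ι → E} (hφ : ∀ i, ‖φ i‖ ≤ 1) (hφφ : ∀ i j, c ≤ ⟪φ i, φ j⟫)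
    {ω η : ι → ℝ} (hω : ∀ i, 0 ≤ ω i) (hη : ∀ i, 0 ≤ η i)
    {x y : E} (hx : x = ∑ i, ω i • φ i) (hy : y = ∑ i, η i • φ i) (hx0 : x ≠ 0) (hy0 : y ≠ 0) :
    c ≤ ⟪x, y⟫ / (‖x‖ * ‖y‖) := by
  have hxω : ‖x‖ ≤ ∑ i, ω i := hx ▸ norm_sum_smul_le_sum _ (fun i _ => hω i) fun i _ => hφ i
  have hyη : ‖y‖ ≤ ∑ i, η i := hy ▸ norm_sum_smul_le_sum _ (fun i _ => hη i) fun i _ => hφ i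
  rw [le_div_iff₀ (by positivity)]
  calc c * (‖x‖ * ‖y‖) ≤ c * ((∑ i, ω i) * ∑ i, η i) := by
        gcongr
        exact (norm_nonneg x).trans hxω
    _ ≤ ⟪x, y⟫ := hx ▸ hy ▸ mul_sum_mul_sum_le_inner_sum_smul _ _
        (fun i _ => hω i) (fun i _ => hη i) fun i _ j _ => hφφ i j

end InnerProductSpace

theorem stmt18 (N r : ℕ) (φ : Fin r → EuclideanSpace ℝ (Fin N))
    (hφ : ∀ i, ‖φ i‖ = 1) (θmax : ℝ) (hθ0 : 0 ≤ θmax) (hθ : θmax < Real.pi / 2)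
    (hpair : ∀ i j, Real.cos θmax ≤ (inner ℝ (φ i) (φ j) : ℝ))
    (C : Set (EuclideanSpace ℝ (Fin N)))
    (hC : C = {x | ∃ ω : Fin r → ℝ, (∀ i, 0 ≤ ω i) ∧ x = ∑ i, ω i • φ i})
    (x y : EuclideanSpace ℝ (Fin N)) (hx : x ∈ C) (hy : y ∈ C)
    (hx0 : x ≠ 0) (hy0 : y ≠ 0) :
    Real.arccos ((inner ℝ x y : ℝ) / (‖x‖ * ‖y‖)) ≤ θmax := by
  subst hC
  obtain ⟨ω, hω, rfl⟩ := hx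
  obtain ⟨η, hη, rfl⟩ := hy
  have hcos : 0 ≤ Real.cos θmax :=
    Real.cos_nonneg_of_mem_Icc ⟨by linarith [Real.pi_pos], hθ.le⟩
  calc Real.arccos _ ≤ Real.arccos (Real.cos θmax) := Real.arccos_le_arccos <|
        le_inner_div_norm_mul_norm_of_eq_sum_smul hcos (fun i => (hφ i).le) hpair hω hη
          rfl rfl hx0 hy0
    _ = θmax := Real.arccos_cos hθ0 (by linarith [Real.pi_pos])
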